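/- arXiv:2212.09483 — 4 statements merged into one kernel-verified Lean document; each statement's English description precedes it below -/
import Mathlib

section
/- Let E be a real normed vector space, let N be a nonempty finite index set of clients with |N| = N, let M ⊆ N be a nonempty subset, and let g : N → E assign a vector (gradient) to each client. Then there exist nonnegative integer weights γ : M → ℕ with Σ_{n∈M} γ_n = N such that ‖(1/N)·Σ_{i∈N} g_i − (1/N)·Σ_{n∈M} γ_n·g_n‖ ≤ (1/N)·Σ_{i∈N} min_{j∈M} ‖g_i − g_j‖. -/
/-- Eq. (14): there is a choice of nonnegative integer weights `γ` on the selected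
subset `M`, summing to `N`, such that the weighted aggregate of the selected
gradients approximates the full average within the facility-location bound
`(1/N) ∑ i min_{j ∈ M} ‖g i - g j‖`. -/
theorem approximation_error_min_bound
    {E : Type*} [NormedAddCommGroup E] [NormedSpace ℝ E]
    {ι : Type*} [Fintype ι] [Nonempty ι] [DecidableEq ι]
    (N : ℕ) (hN : Fintype.card ι = N)
    (M : Finset ι) (hM : M.Nonempty)
    (g : ι → E) :
    ∃ γ : ι → ℕ, (∑ n ∈ M, γ n = N) ∧
      ‖(1 / (N : ℝ)) • ∑ i, g i - (1 / (N : ℝ)) • ∑ n ∈ M, (γ n : ℝ) • g n‖ ≤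
        (1 / (N : ℝ)) * ∑ i, M.inf' hM (fun j => ‖g i - g j‖) := by
  obtain ⟨π, hπM, hπ⟩ : ∃ π : ι → ι, (∀ i, π i ∈ M) ∧
      ∀ i, ‖g i - g (π i)‖ = M.inf' hM (fun j => ‖g i - g j‖) := by
    choose π h1 h2 using fun i => M.exists_mem_eq_inf' hM (fun j => ‖g i - g j‖)
    exact ⟨π, h1, fun i => (h2 i).symm⟩
  refine ⟨fun n => (Finset.univ.filter (fun i => π i = n)).card, ?_, ?_⟩
  · rw [← hN, ← Finset.card_eq_sum_card_fiberwise (fun i _ => hπM i), Finset.card_univ]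
  · have key : ∑ n ∈ M, ((Finset.univ.filter (fun i => π i = n)).card : ℝ) • g n
        = ∑ i, g (π i) := by
      rw [← Finset.sum_fiberwise_of_maps_to (fun i (_ : i ∈ Finset.univ) => hπM i)
        (fun i => g (π i))]
      refine Finset.sum_congr rfl fun n _ => ?_
      rw [Finset.sum_congr rfl (fun i hi => by
        rw [(Finset.mem_filter.mp hi).2]), Finset.sum_const, Nat.cast_smul_eq_nsmul]
    rw [key, ← smul_sub, ← Finset.sum_sub_distrib, norm_smul]
    have hN0 : (0:ℝ) ≤ 1 / N := by positivity
    rw [Real.norm_eq_abs, abs_of_nonneg hN0]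
    refine mul_le_mul_of_nonneg_left ?_ hN0
    calc ‖∑ i, (g i - g (π i))‖ ≤ ∑ i, ‖g i - g (π i)‖ := norm_sum_le _ _
      _ = _ := Finset.sum_congr rfl fun i _ => hπ i
end

section
/- Let E be a real inner product space, let N be a nonempty finite set of clients with |N| = N, and let M ⊆ N be a nonempty subset with weights γ : M → ℕ satisfying Σ_{n∈M} γ_n = N. For each client n let F_n : E → ℝ be differentiable with L-Lipschitz gradient, and let (y_n^j)_{j≥0} be points in E with ‖y_n^j − y_n^0‖ ≤ j·η·G for constants η > 0, G ≥ 0. Define the approximation error at iteration 0 as α = ‖(1/N)·Σ_{n∈M} γ_n·∇F_n(y_n^0) − (1/N)·Σ_{n∈N} ∇F_n(y_n^0)‖. Then for every j, ‖(1/N)·Σ_{n∈M} γ_n·∇F_n(y_n^j) − (1/N)·Σ_{n∈N} ∇F_n(y_n^j)‖ ≤ 2·L·G·j·η + α. -/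
/-!
The error of the weighted subset estimate of the mean gradient is linear in the vector of
client gradients. Hence the error at step `j` is the error `α` at step `0` plus the error of
the gradient increments; by Lipschitz continuity each increment has norm at most `L j η G`,
and both the weighted subset mean (total weight `N`) and the full mean of such increments have
norm at most `L j η G`, so their difference has norm at most `2 L j η G`.
-/

open Finset

section AggregationGap

variable {ι E : Type*} [Fintype ι] [SeminormedAddCommGroup E] [NormedSpace ℝ E]

/-- Applied to the client gradients at `y n j`, this is the vector whose norm is the paper's
approximation error at iteration `j`. -/
noncomputable def aggregationGap (M : Finset ι) (γ : ι → ℕ) (v : ι → E) : E :=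
  (1 / (Fintype.card ι : ℝ)) • ∑ n ∈ M, (γ n : ℝ) • v n -
    (1 / (Fintype.card ι : ℝ)) • ∑ n, v n

theorem aggregationGap_sub (M : Finset ι) (γ : ι → ℕ) (u v : ι → E) :
    aggregationGap M γ u - aggregationGap M γ v = aggregationGap M γ (u - v) := by
  simp only [aggregationGap, Pi.sub_apply, smul_sub, sum_sub_distrib]
  abel

theorem norm_aggregationGap_le [Nonempty ι] {M : Finset ι} {γ : ι → ℕ}
    (hγ : ∑ n ∈ M, γ n = Fintype.card ι) {v : ι → E} {δ : ℝ} (hv : ∀ n, ‖v n‖ ≤ δ) :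
    ‖aggregationGap M γ v‖ ≤ 2 * δ := by
  set N : ℝ := (Fintype.card ι : ℝ)
  have hN : N ≠ 0 := Nat.cast_ne_zero.mpr Fintype.card_ne_zero
  have hweighted : ‖∑ n ∈ M, (γ n : ℝ) • v n‖ ≤ N * δ :=
    calc ‖∑ n ∈ M, (γ n : ℝ) • v n‖ ≤ ∑ n ∈ M, (γ n : ℝ) * δ :=
          norm_sum_le_of_le _ fun n _ => by
            rw [norm_smul, Real.norm_natCast]
            exact mul_le_mul_of_nonneg_left (hv n) (Nat.cast_nonneg _)
      _ = N * δ := by rw [← sum_mul, ← Nat.cast_sum, hγ]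
  have hfull : ‖∑ n, v n‖ ≤ N * δ :=
    calc ‖∑ n, v n‖ ≤ ∑ _n : ι, δ := norm_sum_le_of_le _ fun n _ => hv n
      _ = N * δ := by rw [sum_const, card_univ, nsmul_eq_mul]
  calc ‖aggregationGap M γ v‖
      ≤ 1 / N * ‖∑ n ∈ M, (γ n : ℝ) • v n‖ + 1 / N * ‖∑ n, v n‖ := by
        unfold aggregationGap
        refine (norm_sub_le _ _).trans_eq ?_
        rw [norm_smul, norm_smul, Real.norm_of_nonneg (by positivity)]
    _ ≤ 1 / N * (N * δ) + 1 / N * (N * δ) := by gcongr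
    _ = 2 * δ := by field_simp; ring

end AggregationGap

theorem approximation_error_drift_bound_general
    {E : Type*} [NormedAddCommGroup E] [InnerProductSpace ℝ E] [CompleteSpace E]
    {ι : Type*} [Fintype ι] [Nonempty ι]
    (N : ℕ) (hN : Fintype.card ι = N)
    (M : Finset ι)
    (γ : ι → ℕ) (hγ : ∑ n ∈ M, γ n = N)
    (F : ι → E → ℝ)
    (L : ℝ) (hL : 0 ≤ L)
    (hLip : ∀ n, ∀ x y : E, ‖gradient (F n) x - gradient (F n) y‖ ≤ L * ‖x - y‖)
    (η : ℝ) (G : ℝ)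
    (y : ι → ℕ → E) (hy : ∀ n, ∀ j : ℕ, ‖y n j - y n 0‖ ≤ (j : ℝ) * η * G)
    (α : ℝ)
    (hα : α = ‖(1 / (N : ℝ)) • ∑ n ∈ M, (γ n : ℝ) • gradient (F n) (y n 0) -
              (1 / (N : ℝ)) • ∑ n, gradient (F n) (y n 0)‖) :
    ∀ j : ℕ, ‖(1 / (N : ℝ)) • ∑ n ∈ M, (γ n : ℝ) • gradient (F n) (y n j) -
        (1 / (N : ℝ)) • ∑ n, gradient (F n) (y n j)‖ ≤
      2 * L * G * (j : ℝ) * η + α := by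
  intro j
  subst hN hα
  set g : ℕ → ι → E := fun k n => gradient (F n) (y n k)
  have hincrement : ∀ n, ‖(g j - g 0) n‖ ≤ L * ((j : ℝ) * η * G) := fun n =>
    (hLip n _ _).trans (mul_le_mul_of_nonneg_left (hy n j) hL)
  calc ‖aggregationGap M γ (g j)‖
      ≤ ‖aggregationGap M γ (g j) - aggregationGap M γ (g 0)‖ + ‖aggregationGap M γ (g 0)‖ :=
        norm_le_norm_sub_add _ _
    _ ≤ 2 * (L * ((j : ℝ) * η * G)) + ‖aggregationGap M γ (g 0)‖ := by
        rw [aggregationGap_sub]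
        gcongr
        exact norm_aggregationGap_le hγ hincrement
    _ = 2 * L * G * (j : ℝ) * η + ‖aggregationGap M γ (g 0)‖ := by ring

/-- Step (b) of Lemma 1: the per-iteration approximation error of the weighted
selected-subset gradient aggregate drifts from its initial value `α` by at most
`2·L·G·j·η` after `j` local iterations, when each `F n` has `L`-Lipschitz gradient
and the local iterates satisfy `‖y n j - y n 0‖ ≤ j·η·G`. -/
theorem approximation_error_drift_bound
    {E : Type*} [NormedAddCommGroup E] [InnerProductSpace ℝ E] [CompleteSpace E]
    {ι : Type*} [Fintype ι] [Nonempty ι]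
    (N : ℕ) (hN : Fintype.card ι = N)
    (M : Finset ι) (hM : M.Nonempty)
    (γ : ι → ℕ) (hγ : ∑ n ∈ M, γ n = N)
    (F : ι → E → ℝ) (hF : ∀ n, Differentiable ℝ (F n))
    (L : ℝ) (hL : 0 ≤ L)
    (hLip : ∀ n, ∀ x y : E, ‖gradient (F n) x - gradient (F n) y‖ ≤ L * ‖x - y‖)
    (η : ℝ) (hη : 0 < η) (G : ℝ) (hG : 0 ≤ G)
    (y : ι → ℕ → E) (hy : ∀ n, ∀ j : ℕ, ‖y n j - y n 0‖ ≤ (j : ℝ) * η * G)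
    (α : ℝ)
    (hα : α = ‖(1 / (N : ℝ)) • ∑ n ∈ M, (γ n : ℝ) • gradient (F n) (y n 0) -
              (1 / (N : ℝ)) • ∑ n, gradient (F n) (y n 0)‖) :
    ∀ j : ℕ, ‖(1 / (N : ℝ)) • ∑ n ∈ M, (γ n : ℝ) • gradient (F n) (y n j) -
        (1 / (N : ℝ)) • ∑ n, gradient (F n) (y n j)‖ ≤
      2 * L * G * (j : ℝ) * η + α :=
  approximation_error_drift_bound_general N hN M γ hγ F L hL hLip η G y hy α hα
end

section
/- Let E be a real inner product space, let N be a nonempty finite set of clients with |N| = N, and let M ⊆ N be a nonempty subset with |M| = M such that M divides N; assign each selected client the weight γ = N/M. For each client n ∈ N let F_n : E → ℝ be differentiable with L-Lipschitz gradient and ‖∇F_n(x)‖ ≤ G for all x ∈ E. Fix η > 0 and H ≥ 1, and for each n define local iterates y_n^0 ∈ E and y_n^{j+1} = y_n^j − η·∇F_n(y_n^j) for 0 ≤ j < H, and the accumulated update G_n = Σ_{j=0}^{H−1} ∇F_n(y_n^j). For each n ∈ M let G̃_n ∈ E be a compressed update with compression error β_n = ‖G̃_n − G_n‖, and define the approximation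 error α = ‖(1/N)·Σ_{n∈M} γ·∇F_n(y_n^0) − (1/N)·Σ_{n∈N} ∇F_n(y_n^0)‖. Then ‖(η/M)·Σ_{n∈M} G̃_n − (η/N)·Σ_{n∈N} G_n‖ ≤ L·G·H²·η² + α·H·η + (η/M)·Σ_{n∈M} β_n. -/
/-!
Every local step moves an iterate by at most `η G`, so `‖y_n^j - y_n^0‖ ≤ j η G` and, by
`L`-smoothness, `∇F_n(y_n^j)` stays within `L G η j` of `∇F_n(y_n^0)`. Hence the gap between the
selected and the full mean of the `j`-th gradients differs from the gap at `j = 0`, whose norm is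
`α`, by at most `2 L G η j`. Summing over `j < H` bounds the gap of the accumulated updates by
`L G η H (H - 1) + H α ≤ L G η H² + H α`; the compression errors contribute `(1/M) ∑ β_n`, and
the step size `η` scales everything.
-/

open Finset

theorem two_mul_sum_range_le_sq (H : ℕ) : 2 * ∑ j ∈ range H, (j : ℝ) ≤ (H : ℝ) ^ 2 := by
  have h : (∑ j ∈ range H, j) * 2 ≤ H ^ 2 := by
    rw [sum_range_id_mul_two, sq]
    exact Nat.mul_le_mul_left _ (Nat.sub_le _ _)
  calc 2 * ∑ j ∈ range H, (j : ℝ) = (((∑ j ∈ range H, j) * 2 : ℕ) : ℝ) := by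
        push_cast
        ring
    _ ≤ ((H ^ 2 : ℕ) : ℝ) := by exact_mod_cast h
    _ = (H : ℝ) ^ 2 := by push_cast; rfl

theorem norm_sub_zero_le_of_norm_succ_sub_le {E : Type*} [SeminormedAddCommGroup E]
    {y : ℕ → E} {H : ℕ} {c : ℝ} (hy : ∀ j < H, ‖y (j + 1) - y j‖ ≤ c) {j : ℕ} (hj : j ≤ H) :
    ‖y j - y 0‖ ≤ j * c := by
  rw [← dist_eq_norm, dist_comm]
  simpa using dist_le_range_sum_of_dist_le (d := fun _ ↦ c) j fun hk ↦ by
    rw [dist_comm, dist_eq_norm]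
    exact hy _ (by omega)

theorem norm_map_iterate_sub_le {E : Type*} [NormedAddCommGroup E] [NormedSpace ℝ E]
    {v : E → E} {L G η : ℝ} (hL : 0 ≤ L) (hη : 0 ≤ η)
    (hLip : ∀ x y, ‖v x - v y‖ ≤ L * ‖x - y‖) (hG : ∀ x, ‖v x‖ ≤ G)
    {y : ℕ → E} {H : ℕ} (hrec : ∀ j < H, y (j + 1) = y j - η • v (y j)) {j : ℕ} (hj : j ≤ H) :
    ‖v (y j) - v (y 0)‖ ≤ L * η * G * j := by
  have hstep : ∀ k < H, ‖y (k + 1) - y k‖ ≤ η * G := fun k hk ↦ by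
    rw [hrec k hk, sub_sub_cancel_left, norm_neg, norm_smul, Real.norm_of_nonneg hη]
    exact mul_le_mul_of_nonneg_left (hG _) hη
  calc ‖v (y j) - v (y 0)‖ ≤ L * ‖y j - y 0‖ := hLip _ _
    _ ≤ L * (j * (η * G)) := by gcongr; exact norm_sub_zero_le_of_norm_succ_sub_le hstep hj
    _ = L * η * G * j := by ring

section SelectionGap

variable {ι E : Type*} [NormedAddCommGroup E] [NormedSpace ℝ E]

theorem norm_inv_card_smul_sum_le {s : Finset ι} (hs : s.Nonempty) {f : ι → E} {δ : ℝ}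
    (hf : ∀ n ∈ s, ‖f n‖ ≤ δ) : ‖(#s : ℝ)⁻¹ • ∑ n ∈ s, f n‖ ≤ δ := by
  have hcard : (0 : ℝ) < #s := by exact_mod_cast hs.card_pos
  rw [norm_smul, norm_inv, RCLike.norm_natCast, inv_mul_le_iff₀ hcard]
  calc ‖∑ n ∈ s, f n‖ ≤ ∑ n ∈ s, ‖f n‖ := norm_sum_le _ _
    _ ≤ #s • δ := sum_le_card_nsmul _ _ _ hf
    _ = #s * δ := nsmul_eq_mul _ _

variable [Fintype ι]

/-- The paper's approximation error `α` is the norm of this gap at the gradients `∇F_n(y_n^0)`. -/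
noncomputable def selectionGap (s : Finset ι) : (ι → E) →ₗ[ℝ] E where
  toFun f := (#s : ℝ)⁻¹ • ∑ n ∈ s, f n - (Fintype.card ι : ℝ)⁻¹ • ∑ n, f n
  map_add' f g := by
    simp only [Pi.add_apply, sum_add_distrib, smul_add]
    abel
  map_smul' c f := by
    simp only [Pi.smul_apply, ← smul_sum, smul_comm c, smul_sub, RingHom.id_apply]

theorem selectionGap_apply (s : Finset ι) (f : ι → E) :
    selectionGap s f = (#s : ℝ)⁻¹ • ∑ n ∈ s, f n - (Fintype.card ι : ℝ)⁻¹ • ∑ n, f n :=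
  rfl

theorem selectionGap_eq_of_mul_card_eq {s : Finset ι} (hs : s.Nonempty) {γ : ℝ}
    (hγ : γ * #s = Fintype.card ι) (f : ι → E) :
    selectionGap s f =
      (1 / (Fintype.card ι : ℝ)) • ∑ n ∈ s, γ • f n - (1 / (Fintype.card ι : ℝ)) • ∑ n, f n := by
  have : Nonempty ι := hs.to_type
  have hγ₀ : γ ≠ 0 := left_ne_zero_of_mul (hγ ▸ Nat.cast_ne_zero.mpr Fintype.card_ne_zero)
  have hweight : 1 / (Fintype.card ι : ℝ) * γ = (#s : ℝ)⁻¹ := by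
    rw [← hγ]
    field_simp
  rw [selectionGap_apply, ← smul_sum, smul_smul, hweight, one_div]

theorem norm_selectionGap_le {s : Finset ι} (hs : s.Nonempty) {f : ι → E} {δ : ℝ}
    (hf : ∀ n, ‖f n‖ ≤ δ) : ‖selectionGap s f‖ ≤ 2 * δ := by
  rw [selectionGap_apply, two_mul]
  refine (norm_sub_le _ _).trans (add_le_add ?_ ?_)
  · exact norm_inv_card_smul_sum_le hs fun n _ ↦ hf n
  · exact norm_inv_card_smul_sum_le (univ_nonempty_iff.mpr hs.to_type) fun n _ ↦ hf n

theorem norm_selectionGap_le_add {s : Finset ι} (hs : s.Nonempty) {f f₀ : ι → E} {δ : ℝ}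
    (hf : ∀ n, ‖f n - f₀ n‖ ≤ δ) : ‖selectionGap s f‖ ≤ 2 * δ + ‖selectionGap s f₀‖ := by
  rw [← sub_add_cancel f f₀, map_add]
  exact (norm_add_le _ _).trans (add_le_add_left (norm_selectionGap_le hs hf) _)

theorem inv_card_smul_sum_sub_eq (s : Finset ι) (u : ι → E) (g : ι → ℕ → E) (H : ℕ) :
    (#s : ℝ)⁻¹ • ∑ n ∈ s, u n - (Fintype.card ι : ℝ)⁻¹ • ∑ n, ∑ j ∈ range H, g n j =
      (#s : ℝ)⁻¹ • ∑ n ∈ s, (u n - ∑ j ∈ range H, g n j) +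
        ∑ j ∈ range H, selectionGap s (fun n ↦ g n j) := by
  rw [← map_sum, selectionGap_apply]
  simp only [Finset.sum_apply, sum_sub_distrib, smul_sub]
  abel

theorem norm_inv_card_smul_sum_sub_le {s : Finset ι} (hs : s.Nonempty) (u : ι → E)
    {g : ι → ℕ → E} {H : ℕ} {K : ℝ} (hK : 0 ≤ K) (hg : ∀ n, ∀ j < H, ‖g n j - g n 0‖ ≤ K * j) :
    ‖(#s : ℝ)⁻¹ • ∑ n ∈ s, u n - (Fintype.card ι : ℝ)⁻¹ • ∑ n, ∑ j ∈ range H, g n j‖ ≤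
      (#s : ℝ)⁻¹ * ∑ n ∈ s, ‖u n - ∑ j ∈ range H, g n j‖ + K * (H : ℝ) ^ 2 +
        H * ‖selectionGap s (fun n ↦ g n 0)‖ := by
  have herr : ‖(#s : ℝ)⁻¹ • ∑ n ∈ s, (u n - ∑ j ∈ range H, g n j)‖ ≤
      (#s : ℝ)⁻¹ * ∑ n ∈ s, ‖u n - ∑ j ∈ range H, g n j‖ := by
    rw [norm_smul, norm_inv, RCLike.norm_natCast]
    gcongr
    exact norm_sum_le _ _
  have hgaps : ‖∑ j ∈ range H, selectionGap s (fun n ↦ g n j)‖ ≤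
      K * (H : ℝ) ^ 2 + H * ‖selectionGap s (fun n ↦ g n 0)‖ :=
    calc ‖∑ j ∈ range H, selectionGap s (fun n ↦ g n j)‖
        ≤ ∑ j ∈ range H, (2 * (K * j) + ‖selectionGap s (fun n ↦ g n 0)‖) :=
          (norm_sum_le _ _).trans <| sum_le_sum fun j hj ↦
            norm_selectionGap_le_add hs fun n ↦ hg n j (mem_range.mp hj)
      _ = K * (2 * ∑ j ∈ range H, (j : ℝ)) + H * ‖selectionGap s (fun n ↦ g n 0)‖ := by
          rw [sum_add_distrib, sum_const, card_range, nsmul_eq_mul, mul_sum, mul_sum]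
          congr 1
          exact sum_congr rfl fun j _ ↦ by ring
      _ ≤ K * (H : ℝ) ^ 2 + H * ‖selectionGap s (fun n ↦ g n 0)‖ := by
          gcongr
          exact two_mul_sum_range_le_sq H
  rw [inv_card_smul_sum_sub_eq, add_assoc]
  exact (norm_add_le _ _).trans (add_le_add herr hgaps)

end SelectionGap

theorem lemma1_aggregation_deviation_general
    {E : Type*} [NormedAddCommGroup E] [InnerProductSpace ℝ E] [CompleteSpace E]
    {ι : Type*} [Fintype ι]
    (N Mnum : ℕ) (hN : Fintype.card ι = N)
    (M : Finset ι) (hM : M.Nonempty) (hMcard : M.card = Mnum)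
    (hdvd : Mnum ∣ N) (γ : ℕ) (hγ : γ = N / Mnum)
    (F : ι → E → ℝ)
    (L : ℝ) (hL : 0 ≤ L)
    (hLip : ∀ n, ∀ x y : E, ‖gradient (F n) x - gradient (F n) y‖ ≤ L * ‖x - y‖)
    (G : ℝ) (hG : 0 ≤ G)
    (hGbound : ∀ n, ∀ x : E, ‖gradient (F n) x‖ ≤ G)
    (η : ℝ) (hη : 0 < η) (H : ℕ)
    (y : ι → ℕ → E)
    (hrec : ∀ n, ∀ j < H, y n (j + 1) = y n j - η • gradient (F n) (y n j))
    (Gn : ι → E) (hGn : ∀ n, Gn n = ∑ j ∈ Finset.range H, gradient (F n) (y n j))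
    (Gtilde : ι → E) (β : ι → ℝ) (hβ : ∀ n, β n = ‖Gtilde n - Gn n‖)
    (α : ℝ)
    (hα : α = ‖(1 / (N : ℝ)) • ∑ n ∈ M, (γ : ℝ) • gradient (F n) (y n 0) -
              (1 / (N : ℝ)) • ∑ n, gradient (F n) (y n 0)‖) :
    ‖(η / (Mnum : ℝ)) • ∑ n ∈ M, Gtilde n - (η / (N : ℝ)) • ∑ n, Gn n‖ ≤
      L * G * (H : ℝ) ^ 2 * η ^ 2 + α * (H : ℝ) * η +
        (η / (Mnum : ℝ)) * ∑ n ∈ M, β n := by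
  subst hN hMcard hγ
  have hγM : ((Fintype.card ι / #M : ℕ) : ℝ) * #M = Fintype.card ι := by
    exact_mod_cast Nat.div_mul_cancel hdvd
  rw [← selectionGap_eq_of_mul_card_eq hM hγM] at hα
  have hbound := norm_inv_card_smul_sum_sub_le hM Gtilde (by positivity) fun n j hj ↦
    norm_map_iterate_sub_le hL hη.le (hLip n) (hGbound n) (hrec n) hj.le
  simp only [← hGn, ← hβ, ← hα] at hbound
  have hscale : (η / (#M : ℝ)) • ∑ n ∈ M, Gtilde n - (η / (Fintype.card ι : ℝ)) • ∑ n, Gn n =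
      η • ((#M : ℝ)⁻¹ • ∑ n ∈ M, Gtilde n - (Fintype.card ι : ℝ)⁻¹ • ∑ n, Gn n) := by
    simp only [smul_sub, smul_smul, div_eq_mul_inv]
  rw [hscale, norm_smul, Real.norm_of_nonneg hη.le]
  calc η * ‖_‖ ≤ η * ((#M : ℝ)⁻¹ * ∑ n ∈ M, β n + L * η * G * (H : ℝ) ^ 2 + H * α) := by
        gcongr
    _ = _ := by ring

/-- Lemma 1 (deterministic form): the aggregated compressed update of the selected
subset deviates from the ideal full aggregation by at most
`L·G·H²·η² + α·H·η + (η/M)·∑_{n∈M} β_n`. -/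
theorem lemma1_aggregation_deviation
    {E : Type*} [NormedAddCommGroup E] [InnerProductSpace ℝ E] [CompleteSpace E]
    {ι : Type*} [Fintype ι] [Nonempty ι]
    (N Mnum : ℕ) (hN : Fintype.card ι = N)
    (M : Finset ι) (hM : M.Nonempty) (hMcard : M.card = Mnum)
    (hdvd : Mnum ∣ N) (γ : ℕ) (hγ : γ = N / Mnum)
    (F : ι → E → ℝ) (hF : ∀ n, Differentiable ℝ (F n))
    (L : ℝ) (hL : 0 ≤ L)
    (hLip : ∀ n, ∀ x y : E, ‖gradient (F n) x - gradient (F n) y‖ ≤ L * ‖x - y‖)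
    (G : ℝ) (hG : 0 ≤ G)
    (hGbound : ∀ n, ∀ x : E, ‖gradient (F n) x‖ ≤ G)
    (η : ℝ) (hη : 0 < η) (H : ℕ) (hH : 1 ≤ H)
    (y : ι → ℕ → E)
    (hrec : ∀ n, ∀ j < H, y n (j + 1) = y n j - η • gradient (F n) (y n j))
    (Gn : ι → E) (hGn : ∀ n, Gn n = ∑ j ∈ Finset.range H, gradient (F n) (y n j))
    (Gtilde : ι → E) (β : ι → ℝ) (hβ : ∀ n, β n = ‖Gtilde n - Gn n‖)
    (α : ℝ)
    (hα : α = ‖(1 / (N : ℝ)) • ∑ n ∈ M, (γ : ℝ) • gradient (F n) (y n 0) -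
              (1 / (N : ℝ)) • ∑ n, gradient (F n) (y n 0)‖) :
    ‖(η / (Mnum : ℝ)) • ∑ n ∈ M, Gtilde n - (η / (N : ℝ)) • ∑ n, Gn n‖ ≤
      L * G * (H : ℝ) ^ 2 * η ^ 2 + α * (H : ℝ) * η +
        (η / (Mnum : ℝ)) * ∑ n ∈ M, β n :=
  lemma1_aggregation_deviation_general N Mnum hN M hM hMcard hdvd γ hγ F L hL hLip G hG hGbound η hη
    H y hrec Gn hGn Gtilde β hβ α hα
end

section
/- Let μ > 0, λ > 1/μ, τ ≥ λμ, ρ ≥ 0, C ≥ 0, α ≥ 0, β ≥ 0, and H ≥ 1 be real constants, and define η_k = λ/(k + τ). Suppose the sequence (e_k)_{k≥0} of nonnegative reals satisfies the per-round recursion e_{k+1} ≤ (1 − μ·η_k)·e_k + 2·η_k·ρ·(α·H + β) + η_k²·C for all k ≥ 0. Then for every K ≥ 0, e_K ≤ max{λ²·C/(λμ − 1), τ·e_0}/(K + τ) + (2ρ/μ)·(α·H + β). In particular, e_K = O(1/K) + O(α) + O(β). -/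
/-!
Shifting by the error floor `D = (2ρ/μ)(αH + β)` absorbs the bias term of the recursion:
`u_k = e_k - D` satisfies `u_{k+1} ≤ (1 - λμ/(k+τ)) u_k + λ²C/(k+τ)²`. For such a recursion the
bound `u_k ≤ ν/(k+τ)` propagates by induction as soon as `λ²C ≤ ν(λμ - 1)`, because
`(1 - a/t)(ν/t) + ν(a-1)/t² = ν(t-1)/t² ≤ ν/(t+1)`.
-/

theorem one_sub_div_mul_add_div_sq_le_div_add_one {a b t ν x : ℝ} (ht : 0 < t) (hat : a ≤ t)
    (hν : 0 ≤ ν) (hb : b ≤ ν * (a - 1)) (hx : x ≤ ν / t) :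
    (1 - a / t) * x + b / t ^ 2 ≤ ν / (t + 1) := by
  have hcoef : 0 ≤ 1 - a / t := by
    rw [sub_nonneg, div_le_one ht]; exact hat
  calc (1 - a / t) * x + b / t ^ 2
      ≤ (1 - a / t) * (ν / t) + ν * (a - 1) / t ^ 2 := by gcongr
    _ = ν * (t - 1) / t ^ 2 := by field_simp; ring
    _ ≤ ν / (t + 1) := by
      rw [div_le_div_iff₀ (by positivity) (by positivity)]
      nlinarith

theorem le_div_of_le_one_sub_div_mul_add_div_sq {a b τ ν : ℝ} {u : ℕ → ℝ} (hτ : 0 < τ)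
    (haτ : a ≤ τ) (hν : 0 ≤ ν) (hb : b ≤ ν * (a - 1)) (h0 : τ * u 0 ≤ ν)
    (hrec : ∀ k : ℕ, u (k + 1) ≤ (1 - a / (k + τ)) * u k + b / ((k : ℝ) + τ) ^ 2) :
    ∀ k : ℕ, u k ≤ ν / ((k : ℝ) + τ) := by
  intro k
  induction k with
  | zero => simpa [le_div_iff₀ hτ, mul_comm] using h0
  | succ k ih =>
    have hk : (0 : ℝ) ≤ k := k.cast_nonneg
    calc u (k + 1) ≤ (1 - a / (k + τ)) * u k + b / ((k : ℝ) + τ) ^ 2 := hrec k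
      _ ≤ ν / ((k : ℝ) + τ + 1) :=
        one_sub_div_mul_add_div_sq_le_div_add_one (by linarith) (by linarith) hν hb ih
      _ = ν / (((k + 1 : ℕ) : ℝ) + τ) := by push_cast; ring_nf

theorem fedcg_convergence_rate_general
    (μ lam τ ρ C α β H : ℝ)
    (hμ : 0 < μ) (hlam : 1 / μ < lam) (hτ : lam * μ ≤ τ)
    (hρ : 0 ≤ ρ) (hα : 0 ≤ α) (hβ : 0 ≤ β) (hH : 1 ≤ H)
    (η : ℕ → ℝ) (hη : ∀ k : ℕ, η k = lam / ((k : ℝ) + τ))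
    (e : ℕ → ℝ) (he : ∀ k, 0 ≤ e k)
    (hrec : ∀ k : ℕ,
      e (k + 1) ≤ (1 - μ * η k) * e k + 2 * η k * ρ * (α * H + β) + (η k) ^ 2 * C) :
    ∀ K : ℕ,
      e K ≤ max (lam ^ 2 * C / (lam * μ - 1)) (τ * e 0) / ((K : ℝ) + τ) +
        (2 * ρ / μ) * (α * H + β) := by
  have hlamμ : 1 < lam * μ := by rwa [div_lt_iff₀ hμ] at hlam
  have hτ0 : 0 < τ := by linarith
  set ν := max (lam ^ 2 * C / (lam * μ - 1)) (τ * e 0)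
  set D := (2 * ρ / μ) * (α * H + β)
  have hD : 0 ≤ D := mul_nonneg (by positivity) (add_nonneg (mul_nonneg hα (by linarith)) hβ)
  have hμD : μ * D = 2 * ρ * (α * H + β) := by simp only [D]; field_simp
  clear_value D
  have hb : lam ^ 2 * C ≤ ν * (lam * μ - 1) :=
    (div_le_iff₀ (by linarith)).mp (le_max_left _ _)
  have h0 : τ * (e 0 - D) ≤ ν :=
    le_trans (by nlinarith) (le_max_right (lam ^ 2 * C / (lam * μ - 1)) _)
  have hshift : ∀ k : ℕ, e (k + 1) - D ≤
      (1 - lam * μ / (k + τ)) * (e k - D) + lam ^ 2 * C / ((k : ℝ) + τ) ^ 2 := by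
    intro k
    rw [mul_comm lam μ, mul_div_assoc, ← hη k, mul_div_right_comm, ← div_pow, ← hη k]
    linear_combination hrec k - η k * hμD
  intro K
  have := le_div_of_le_one_sub_div_mul_add_div_sq (u := fun k => e k - D) hτ0 hτ
    (le_trans (mul_nonneg hτ0.le (he 0)) (le_max_right _ _)) hb h0 hshift K
  linarith

/-- Theorem 1 (quantitative form): under the per-round recursion of Eq. (10), the
expected squared distance to the optimum satisfies
`e_K ≤ max (λ²C/(λμ-1)) (τ·e₀)/(K+τ) + (2ρ/μ)(αH + β)`,
i.e. `e_K = O(1/K) + O(α) + O(β)`. -/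
theorem fedcg_convergence_rate
    (μ lam τ ρ C α β H : ℝ)
    (hμ : 0 < μ) (hlam : 1 / μ < lam) (hτ : lam * μ ≤ τ)
    (hρ : 0 ≤ ρ) (hC : 0 ≤ C) (hα : 0 ≤ α) (hβ : 0 ≤ β) (hH : 1 ≤ H)
    (η : ℕ → ℝ) (hη : ∀ k : ℕ, η k = lam / ((k : ℝ) + τ))
    (e : ℕ → ℝ) (he : ∀ k, 0 ≤ e k)
    (hrec : ∀ k : ℕ,
      e (k + 1) ≤ (1 - μ * η k) * e k + 2 * η k * ρ * (α * H + β) + (η k) ^ 2 * C) :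
    ∀ K : ℕ,
      e K ≤ max (lam ^ 2 * C / (lam * μ - 1)) (τ * e 0) / ((K : ℝ) + τ) +
        (2 * ρ / μ) * (α * H + β) :=
  fedcg_convergence_rate_general μ lam τ ρ C α β H hμ hlam hτ hρ hα hβ hH η hη e he hrec
end
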